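/- Among all unit-norm frames {f_i}_{i=1}^k of ℝ^n, the 2-frame potential FP₂(F) = ∑_{i<j} |⟨f_i,f_j⟩|² is minimized exactly when F is a tight frame, i.e., when F Fᵀ = (k/n) I_n. -/

import Mathlib

/-!
Write `S = ∑ᵢ fᵢ ⟨fᵢ, ·⟩` for the frame operator of a unit-norm family of `k` vectors in `ℝⁿ`,
so that `tr S = k` and `tr S² = ∑ᵢⱼ ⟨fᵢ, fⱼ⟩² = k + 2 FP₂`. Expanding `tr (S - (k/n) I)²` gives
`2 FP₂ = k²/n - k + tr (S - (k/n) I)²`; the last term is a nonnegative number vanishing exactly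
when `S = (k/n) I`, i.e. when the family is tight. Hence `FP₂ ≥ (k²/n - k)/2` with equality
exactly at tight frames, and this bound is attained because unit-norm tight frames exist for
every `k ≥ n`: the rows of a suitably scaled `k × n` Hartley (`cas = cos + sin`) matrix.
-/

open scoped RealInnerProductSpace

/-- The 2-frame potential `FP₂(f) = ∑_{i<j} |⟨f i, f j⟩|²`. -/
noncomputable def framePotential2 {n k : ℕ}
    (f : Fin k → EuclideanSpace ℝ (Fin n)) : ℝ :=
  ∑ q ∈ Finset.filter (fun q : Fin k × Fin k => q.1 < q.2) Finset.univ,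
    |⟪f q.1, f q.2⟫| ^ 2

open InnerProductSpace

lemma sum_sum_eq_sum_diag_add_two_nsmul_sum_lt {α M : Type*} [Fintype α] [LinearOrder α]
    [AddCommMonoid M] (g : α → α → M) (hg : ∀ i j, g i j = g j i) :
    ∑ i, ∑ j, g i j =
      ∑ i, g i i + 2 • ∑ q ∈ Finset.univ.filter (fun q : α × α => q.1 < q.2), g q.1 q.2 := by
  have hsplit (i j : α) : g i j = (if i = j then g i j else 0) +
      ((if i < j then g i j else 0) + (if j < i then g j i else 0)) := by
    rcases lt_trichotomy i j with h | rfl | h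
    · simp [h, h.ne, h.not_gt]
    · simp
    · simp [h, h.ne', h.not_gt, hg i j]
  rw [Finset.sum_filter, Fintype.sum_prod_type, two_nsmul]
  conv_lhs => enter [2, i, 2, j]; rw [hsplit i j]
  simp only [Finset.sum_add_distrib, Finset.sum_ite_eq, Finset.mem_univ, if_true]
  rw [Finset.sum_comm (f := fun i j => if j < i then g j i else 0)]

lemma LinearMap.IsSymmetric.trace_mul_self_eq_sum {E ν : Type*} [NormedAddCommGroup E]
    [InnerProductSpace ℝ E] [Fintype ν] {T : Module.End ℝ E} (hT : T.IsSymmetric)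
    (b : OrthonormalBasis ν ℝ E) : LinearMap.trace ℝ E (T * T) = ∑ a, ‖T (b a)‖ ^ 2 := by
  simp [LinearMap.trace_eq_sum_inner _ b, ← hT _]

lemma LinearMap.IsSymmetric.trace_mul_self_nonneg {E : Type*} [NormedAddCommGroup E]
    [InnerProductSpace ℝ E] [FiniteDimensional ℝ E] {T : Module.End ℝ E} (hT : T.IsSymmetric) :
    0 ≤ LinearMap.trace ℝ E (T * T) := by
  rw [hT.trace_mul_self_eq_sum (stdOrthonormalBasis ℝ E)]
  positivity

lemma LinearMap.IsSymmetric.trace_mul_self_eq_zero_iff {E : Type*} [NormedAddCommGroup E]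
    [InnerProductSpace ℝ E] [FiniteDimensional ℝ E] {T : Module.End ℝ E} (hT : T.IsSymmetric) :
    LinearMap.trace ℝ E (T * T) = 0 ↔ T = 0 := by
  rw [hT.trace_mul_self_eq_sum (stdOrthonormalBasis ℝ E),
    Finset.sum_eq_zero_iff_of_nonneg fun _ _ => by positivity]
  refine ⟨fun h => (stdOrthonormalBasis ℝ E).toBasis.ext fun a => ?_, fun h => by simp [h]⟩
  simpa using h a

lemma LinearMap.trace_sub_smul_one_mul_self {E : Type*} [AddCommGroup E] [Module ℝ E]
    [FiniteDimensional ℝ E] (T : Module.End ℝ E) (c : ℝ) :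
    LinearMap.trace ℝ E ((T - c • 1) * (T - c • 1)) =
      LinearMap.trace ℝ E (T * T) - 2 * c * LinearMap.trace ℝ E T + c ^ 2 * Module.finrank ℝ E := by
  simp only [mul_sub, sub_mul, Algebra.smul_mul_assoc, one_mul, Algebra.mul_smul_comm, mul_one,
    map_sub, map_smul, smul_eq_mul, LinearMap.trace_one]
  ring

section FrameOperator

variable {E ι : Type*} [NormedAddCommGroup E] [InnerProductSpace ℝ E] [Fintype ι]

noncomputable def frameOperator (f : ι → E) : Module.End ℝ E :=
  ∑ i, (rankOne ℝ (f i) (f i) : E →ₗ[ℝ] E)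

@[simp]
lemma frameOperator_apply (f : ι → E) (x : E) : frameOperator f x = ∑ i, ⟪f i, x⟫ • f i := by
  simp [frameOperator]

lemma isSymmetric_frameOperator_sub_smul_one (f : ι → E) (A : ℝ) :
    (frameOperator f - A • 1).IsSymmetric := by
  intro x y
  simp [sum_inner, inner_sum, inner_sub_left, inner_sub_right, inner_smul_left, inner_smul_right,
    real_inner_comm, mul_comm]

lemma sum_inner_sq_eq_mul_norm_sq_iff (f : ι → E) (A : ℝ) :
    (∀ x, ∑ i, ⟪x, f i⟫ ^ 2 = A * ‖x‖ ^ 2) ↔ frameOperator f = A • 1 := by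
  rw [← sub_eq_zero, ← (isSymmetric_frameOperator_sub_smul_one f A).inner_map_self_eq_zero]
  simp [inner_sub_left, sum_inner, inner_smul_left, real_inner_comm, sq, sub_eq_zero]

lemma frameOperator_eq_smul_one_of_sum_mul {ν : Type*} [Fintype ν] [DecidableEq ν]
    (f : ι → EuclideanSpace ℝ ν) (A : ℝ)
    (h : ∀ a b, ∑ i, f i a * f i b = if a = b then A else 0) : frameOperator f = A • 1 := by
  refine (EuclideanSpace.basisFun ν ℝ).toBasis.ext fun b => ?_
  ext a
  simp [EuclideanSpace.inner_single_right, ← h a b, mul_comm]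

variable [FiniteDimensional ℝ E]

lemma trace_frameOperator (f : ι → E) :
    LinearMap.trace ℝ E (frameOperator f) = ∑ i, ‖f i‖ ^ 2 := by
  simp [frameOperator, trace_rankOne]

lemma trace_frameOperator_mul_self (f : ι → E) :
    LinearMap.trace ℝ E (frameOperator f * frameOperator f) = ∑ i, ∑ j, ⟪f i, f j⟫ ^ 2 := by
  simp only [frameOperator, Finset.sum_mul, Finset.mul_sum, map_sum, Module.End.mul_eq_comp]
  simp only [← ContinuousLinearMap.toLinearMap_comp, rankOne_comp_rankOne]
  simp [trace_rankOne, sq, real_inner_comm]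

end FrameOperator

section Hartley

open Real

open Complex in
lemma sum_exp_two_pi_mul_I {k : ℕ} (hk : k ≠ 0) (s : ℤ) :
    ∑ j : Fin k, exp (↑(2 * π * j * s / k) * I) = if (k : ℤ) ∣ s then (k : ℂ) else 0 := by
  have hζ : IsPrimitiveRoot (exp (2 * π * I / k)) k := isPrimitiveRoot_exp k hk
  have hterm (j : ℕ) : exp (↑(2 * π * j * s / k) * I) = (exp (2 * π * I / k) ^ s) ^ j := by
    rw [← exp_int_mul, ← Complex.exp_nat_mul]
    push_cast
    ring_nf
  simp only [hterm, Fin.sum_univ_eq_sum_range (fun j => (exp (2 * π * I / k) ^ s) ^ j)]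
  split_ifs with hs
  · simp [(hζ.zpow_eq_one_iff_dvd s).2 hs]
  · have hpow : (exp (2 * π * I / k) ^ s) ^ k = 1 := by
      rw [← zpow_natCast, ← zpow_mul, mul_comm s, zpow_mul, zpow_natCast, hζ.pow_eq_one, one_zpow]
    rw [geom_sum_eq (mt (hζ.zpow_eq_one_iff_dvd s).1 hs), hpow, sub_self, zero_div]

lemma sum_cos_two_pi_mul {k : ℕ} (hk : k ≠ 0) (s : ℤ) :
    ∑ j : Fin k, cos (2 * π * j * s / k) = if (k : ℤ) ∣ s then (k : ℝ) else 0 := by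
  have := congrArg Complex.re (sum_exp_two_pi_mul_I hk s)
  simp only [Complex.re_sum, Complex.exp_ofReal_mul_I_re] at this
  rw [this]
  split_ifs <;> simp

lemma sum_sin_two_pi_mul {k : ℕ} (hk : k ≠ 0) (s : ℤ) :
    ∑ j : Fin k, sin (2 * π * j * s / k) = 0 := by
  have := congrArg Complex.im (sum_exp_two_pi_mul_I hk s)
  simp only [Complex.im_sum, Complex.exp_ofReal_mul_I_im] at this
  rw [this]
  split_ifs <;> simp

lemma cas_mul_cas (x y : ℝ) : (cos x + sin x) * (cos y + sin y) = cos (x - y) + sin (x + y) := by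
  rw [cos_sub, sin_add]
  ring

/- Column `a` of the frame below is the Hartley vector `j ↦ cas (2π j t / k)` at the frequency
`t = a - (n - 1) / 2`. These frequencies are symmetric about `0`, which makes every row a unit
vector, and they differ pairwise by nonzero integers of absolute value `< n ≤ k`, which makes the
columns orthogonal. -/
noncomputable def hartleyAngle (n k : ℕ) (j : Fin k) (a : Fin n) : ℝ :=
  π * j * (2 * a + 1 - n) / k

noncomputable def hartleyFrame (n k : ℕ) (j : Fin k) : EuclideanSpace ℝ (Fin n) :=
  WithLp.toLp 2 fun a => (cos (hartleyAngle n k j a) + sin (hartleyAngle n k j a)) / √n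

lemma hartleyAngle_sub {n k : ℕ} (j : Fin k) (a b : Fin n) :
    hartleyAngle n k j a - hartleyAngle n k j b = 2 * π * j * ((a - b : ℤ) : ℝ) / k := by
  simp only [hartleyAngle]; push_cast; ring

lemma hartleyAngle_add {n k : ℕ} (j : Fin k) (a b : Fin n) :
    hartleyAngle n k j a + hartleyAngle n k j b = 2 * π * j * ((a + b + 1 - n : ℤ) : ℝ) / k := by
  simp only [hartleyAngle]; push_cast; ring

lemma hartleyAngle_rev {n k : ℕ} (j : Fin k) (a : Fin n) :
    hartleyAngle n k j a.rev = -hartleyAngle n k j a := by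
  simp only [hartleyAngle, Fin.val_rev]
  rw [Nat.cast_sub a.isLt]
  push_cast; ring

lemma sum_sin_two_mul_hartleyAngle {n k : ℕ} (j : Fin k) :
    ∑ a : Fin n, sin (2 * hartleyAngle n k j a) = 0 := by
  have h := Equiv.sum_comp Fin.revPerm fun a : Fin n => sin (2 * hartleyAngle n k j a)
  simp only [Fin.revPerm_apply, hartleyAngle_rev, mul_neg, sin_neg, Finset.sum_neg_distrib] at h
  linarith

lemma norm_hartleyFrame {n k : ℕ} (hn : 0 < n) (j : Fin k) : ‖hartleyFrame n k j‖ = 1 := by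
  have hcas (x : ℝ) : (cos x + sin x) ^ 2 = 1 + sin (2 * x) := by
    rw [sq, cas_mul_cas, sub_self, cos_zero, two_mul]
  rw [EuclideanSpace.norm_eq, sqrt_eq_one]
  simp only [hartleyFrame, Real.norm_eq_abs, sq_abs, div_pow, hcas, sq_sqrt (Nat.cast_nonneg n)]
  rw [← Finset.sum_div, Finset.sum_add_distrib, sum_sin_two_mul_hartleyAngle]
  simp [hn.ne']

lemma sum_hartleyFrame_mul {n k : ℕ} (hk : n ≤ k) (a b : Fin n) :
    ∑ j, hartleyFrame n k j a * hartleyFrame n k j b = if a = b then (k : ℝ) / n else 0 := by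
  have hk0 : k ≠ 0 := by have := a.pos; omega
  have hdvd : (k : ℤ) ∣ (a - b : ℤ) ↔ a = b := by
    refine ⟨fun h => ?_, fun h => by simp [h]⟩
    have := Int.eq_zero_of_abs_lt_dvd h (by rw [abs_lt]; omega)
    omega
  simp only [hartleyFrame, div_mul_div_comm, cas_mul_cas, hartleyAngle_sub, hartleyAngle_add]
  rw [← Finset.sum_div, Finset.sum_add_distrib, sum_cos_two_pi_mul hk0, sum_sin_two_pi_mul hk0,
    add_zero, mul_self_sqrt (Nat.cast_nonneg n)]
  simp only [hdvd]
  split_ifs <;> simp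

lemma frameOperator_hartleyFrame {n k : ℕ} (hk : n ≤ k) :
    frameOperator (hartleyFrame n k) = ((k : ℝ) / n) • 1 :=
  frameOperator_eq_smul_one_of_sum_mul _ _ (sum_hartleyFrame_mul hk)

end Hartley

section FramePotential

variable {n k : ℕ}

lemma two_mul_framePotential2_eq (f : Fin k → EuclideanSpace ℝ (Fin n)) (hf : ∀ i, ‖f i‖ = 1) :
    2 * framePotential2 f = (k : ℝ) ^ 2 / n - k + LinearMap.trace ℝ _
      ((frameOperator f - ((k : ℝ) / n) • 1) * (frameOperator f - ((k : ℝ) / n) • 1)) := by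
  have hgram : ∑ i, ∑ j, ⟪f i, f j⟫ ^ 2 = k + 2 * framePotential2 f := by
    rw [sum_sum_eq_sum_diag_add_two_nsmul_sum_lt _ fun i j => by rw [real_inner_comm]]
    simp [framePotential2, hf, sq_abs]
  rw [LinearMap.trace_sub_smul_one_mul_self, trace_frameOperator_mul_self, trace_frameOperator,
    hgram, finrank_euclideanSpace_fin]
  simp only [hf, one_pow, Finset.sum_const, Finset.card_univ, Fintype.card_fin, nsmul_eq_mul,
    mul_one]
  rcases eq_or_ne (n : ℝ) 0 with hn | hn
  · simp [hn]
  · field_simp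
    ring

lemma le_framePotential2 (f : Fin k → EuclideanSpace ℝ (Fin n)) (hf : ∀ i, ‖f i‖ = 1) :
    ((k : ℝ) ^ 2 / n - k) / 2 ≤ framePotential2 f := by
  have := (isSymmetric_frameOperator_sub_smul_one f ((k : ℝ) / n)).trace_mul_self_nonneg
  linarith [two_mul_framePotential2_eq f hf]

lemma framePotential2_eq_iff_frameOperator_eq (f : Fin k → EuclideanSpace ℝ (Fin n))
    (hf : ∀ i, ‖f i‖ = 1) :
    framePotential2 f = ((k : ℝ) ^ 2 / n - k) / 2 ↔ frameOperator f = ((k : ℝ) / n) • 1 := by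
  rw [← sub_eq_zero (a := frameOperator f),
    ← (isSymmetric_frameOperator_sub_smul_one f _).trace_mul_self_eq_zero_iff]
  constructor <;> intro h <;> linarith [two_mul_framePotential2_eq f hf]

end FramePotential

/-- Among unit-norm families of `k ≥ n` vectors in `ℝ^n`, the 2-frame potential
is minimized exactly at tight frames, i.e. those with
`∑ᵢ ⟨x, fᵢ⟩² = (k/n)‖x‖²` for all `x`. -/
theorem framePotential2_min_iff_tight {n k : ℕ} (hn : 0 < n) (hk : n ≤ k)
    (f : Fin k → EuclideanSpace ℝ (Fin n)) (hf : ∀ i, ‖f i‖ = 1) :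
    (∀ g : Fin k → EuclideanSpace ℝ (Fin n), (∀ i, ‖g i‖ = 1) →
        framePotential2 f ≤ framePotential2 g) ↔
      ∀ x : EuclideanSpace ℝ (Fin n),
        ∑ i, ⟪x, f i⟫ ^ 2 = ((k : ℝ) / n) * ‖x‖ ^ 2 := by
  have hH := norm_hartleyFrame hn (k := k)
  rw [sum_inner_sq_eq_mul_norm_sq_iff, ← framePotential2_eq_iff_frameOperator_eq f hf]
  constructor
  · intro hmin
    have hH_min := (framePotential2_eq_iff_frameOperator_eq _ hH).2 (frameOperator_hartleyFrame hk)
    exact le_antisymm (hH_min ▸ hmin _ hH) (le_framePotential2 f hf)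
  · intro hf_min g hg
    exact hf_min ▸ le_framePotential2 g hg
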